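/- Let α₀, α₁ ∈ ℂ with 2α₀ + α₁ = 1, U ⊆ ℂ open, and let (x, y, z, w, q) be differentiable functions on U solving system (11): x' = −2xz − 3α₀, y' = yz + (3/2)α₁, z' = z² + q, w' = −zw + (2/3)x + (1/3)y, q' = w, and assume x(t) ≠ 0 for all t ∈ U. Then the functions (x, y + 9α₀ w/x, z + 3α₀/x, w, q) solve system (11) with parameters (−α₀, α₁ + 4α₀) on U. (This is the Bäcklund transformation s₀ of the affine Weyl group of type A₂^(2).) -/

import Mathlib

/-!
Direct verification. Along a solution, `x' = -2xz - 3α₀` gives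
`(3α₀/x)' = 6α₀ z/x + 9α₀²/x² = (z + 3α₀/x)² - z²`, so the shifted `z` again satisfies the
Riccati equation; the shifted `y` is checked the same way by the quotient rule. In the `x`- and
`w`-equations the substitution only adds `-6α₀` resp. `-3α₀w/x + 3α₀w/x`, which the new
parameter absorbs resp. cancels.
-/

/-- `(x,y,z,w,q)` solves system (11) with parameters `α₀, α₁` on `U`:
`x' = -2xz - 3α₀`, `y' = yz + (3/2)α₁`, `z' = z² + q`,
`w' = -zw + (2/3)x + (1/3)y`, `q' = w`. -/
def SolvesSys11 (a0 a1 : ℂ) (U : Set ℂ) (x y z w q : ℂ → ℂ) : Prop :=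
  ∀ t ∈ U,
    HasDerivAt x (-2 * x t * z t - 3 * a0) t ∧
    HasDerivAt y (y t * z t + (3/2) * a1) t ∧
    HasDerivAt z (z t ^ 2 + q t) t ∧
    HasDerivAt w (-(z t) * w t + (2/3) * x t + (1/3) * y t) t ∧
    HasDerivAt q (w t) t

section BacklundS0

variable {a0 : ℂ} {x y z w q : ℂ → ℂ} {t : ℂ}

theorem hasDerivAt_backlundS0_z (hx : HasDerivAt x (-2 * x t * z t - 3 * a0) t)
    (hz : HasDerivAt z (z t ^ 2 + q t) t) (hxt : x t ≠ 0) :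
    HasDerivAt (fun t => z t + 3 * a0 / x t) ((z t + 3 * a0 / x t) ^ 2 + q t) t := by
  refine (hz.fun_add ((hasDerivAt_const t (3 * a0)).fun_div hx hxt)).congr_deriv ?_
  field_simp
  ring

theorem hasDerivAt_backlundS0_y (a1 : ℂ) (hx : HasDerivAt x (-2 * x t * z t - 3 * a0) t)
    (hy : HasDerivAt y (y t * z t + (3/2) * a1) t)
    (hw : HasDerivAt w (-(z t) * w t + (2/3) * x t + (1/3) * y t) t) (hxt : x t ≠ 0) :
    HasDerivAt (fun t => y t + 9 * a0 * w t / x t)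
      ((y t + 9 * a0 * w t / x t) * (z t + 3 * a0 / x t) + (3/2) * (a1 + 4 * a0)) t := by
  refine (hy.fun_add ((hw.const_mul (9 * a0)).fun_div hx hxt)).congr_deriv ?_
  field_simp
  ring

end BacklundS0

theorem stmt5_general (a0 a1 : ℂ) (U : Set ℂ)
    (x y z w q : ℂ → ℂ) (h : SolvesSys11 a0 a1 U x y z w q)
    (hx : ∀ t ∈ U, x t ≠ 0) :
    SolvesSys11 (-a0) (a1 + 4 * a0) U
      x
      (fun t => y t + 9 * a0 * w t / x t)
      (fun t => z t + 3 * a0 / x t)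
      w q := by
  intro t ht
  obtain ⟨hx', hy', hz', hw', hq'⟩ := h t ht
  have hxt := hx t ht
  refine ⟨?_, hasDerivAt_backlundS0_y a1 hx' hy' hw' hxt,
    hasDerivAt_backlundS0_z hx' hz' hxt, ?_, hq'⟩
  · exact hx'.congr_deriv (by field_simp; ring)
  · exact hw'.congr_deriv (by field_simp; ring)

/-- The Bäcklund transformation `s₀` of the affine Weyl group of
type `A₂⁽²⁾`: if `(x,y,z,w,q)` solves system (11) with parameters `(α₀,α₁)`,
`2α₀ + α₁ = 1`, and `x ≠ 0` on `U`, then `(x, y + 9α₀w/x, z + 3α₀/x, w, q)`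
solves system (11) with parameters `(-α₀, α₁ + 4α₀)`. -/
theorem stmt5 (a0 a1 : ℂ) (hrel : 2 * a0 + a1 = 1) (U : Set ℂ) (hU : IsOpen U)
    (x y z w q : ℂ → ℂ) (h : SolvesSys11 a0 a1 U x y z w q)
    (hx : ∀ t ∈ U, x t ≠ 0) :
    SolvesSys11 (-a0) (a1 + 4 * a0) U
      x
      (fun t => y t + 9 * a0 * w t / x t)
      (fun t => z t + 3 * a0 / x t)
      w q :=
  stmt5_general a0 a1 U x y z w q h hx
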